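/- Let F be a free group with basis x_1, …, x_n, let D_1, …, D_n be the Fox derivatives of ℤ[F], let r ≠ 1 be an element of F, let R be the normal closure of r in F, and let H be the subgroup generated by x_1, …, x_{n−1}. If H ∩ R = 1, then D_n(r) ≢ 0 mod ℤ[F]·(R−1). -/

import Mathlib

/-!
Push the Fox derivative `D = D_n` forward to `ℤ[F/R]`. Since `D(uv) = D(u)v + D(v)` on group
elements and `R` acts trivially on `ℤ[F/R]`, the assumption `D(r) ∈ ℤ[F](R-1)` makes this
image vanish on the whole normal closure `R` of `r`.

Take a shortest nontrivial `w ∈ R`, with reduced word `y_0 ⋯ y_{m-1}`. Minimality makes the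
images in `F/R` of the suffixes `y_j ⋯ y_{m-1}` (`0 ≤ j < m`) pairwise distinct, and makes the
word cyclically reduced. By the Fox formula the image of `D(w)` is a signed sum of suffix
images: a letter `x_n` at position `j` contributes `+ suffix (j+1)`, a letter `x_n⁻¹` contributes
`- suffix j`, and suffix `m` equals suffix `0` in `F/R`. Two terms can therefore only cancel if
`x_n x_n⁻¹` occurs cyclically adjacent in the word, which cyclic reduction excludes. Hence `w`
contains no `x_n^{±1}`, so `w ∈ H ∩ R = 1`, a contradiction.
-/

open scoped Classical

/-- The augmentation map `ℤ[F] → ℤ` induced by the trivial homomorphism `F → 1`. -/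
noncomputable def aug (J : Type) : MonoidAlgebra ℤ (FreeGroup J) →ₐ[ℤ] ℤ :=
  MonoidAlgebra.lift ℤ ℤ (FreeGroup J) 1

/-- `D` is the Fox derivative of `ℤ[F]` with respect to the generator `g_k`:
it is ℤ-linear, satisfies `D(uv) = D(u)v + ε(u)D(v)`, and sends `g_j` to `δ_{kj}`. -/
def IsFoxDerivative {J : Type} (k : J)
    (D : MonoidAlgebra ℤ (FreeGroup J) →ₗ[ℤ] MonoidAlgebra ℤ (FreeGroup J)) : Prop :=
  (∀ u v : MonoidAlgebra ℤ (FreeGroup J), D (u * v) = D u * v + (aug J u) • D v) ∧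
  (∀ j : J, D (MonoidAlgebra.of ℤ (FreeGroup J) (FreeGroup.of j)) = if k = j then 1 else 0)

/-- The ideal `ℤ[F]·(N−1)` of `ℤ[F]` generated by the elements `n − 1`, `n ∈ N`. -/
noncomputable def NIdeal {J : Type} (N : Subgroup (FreeGroup J)) :
    Submodule ℤ (MonoidAlgebra ℤ (FreeGroup J)) :=
  Submodule.span ℤ {a | ∃ u : MonoidAlgebra ℤ (FreeGroup J), ∃ n ∈ N,
    a = u * (MonoidAlgebra.of ℤ (FreeGroup J) n - 1)}

/-- The ideal `d·ℤ[F]` of multiples of the integer `d`. -/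
noncomputable def dIdeal {J : Type} (d : ℤ) : Submodule ℤ (MonoidAlgebra ℤ (FreeGroup J)) :=
  Submodule.span ℤ {a | ∃ u : MonoidAlgebra ℤ (FreeGroup J), a = d • u}

theorem val_finRotate {n : ℕ} (j : Fin n) :
    (finRotate n j : ℕ) = if (j : ℕ) + 1 = n then 0 else (j : ℕ) + 1 := by
  cases n with
  | zero => exact j.elim0
  | succ n => rw [coe_finRotate]; simp [Fin.ext_iff]

namespace MonoidAlgebra

theorem mapDomainRingHom_of {R M N : Type*} [Semiring R] [Monoid M] [Monoid N] (f : M →* N)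
    (m : M) : mapDomainRingHom R f (of R M m) = of R N (f m) := by
  simp [of_apply, mapDomain_single]

theorem iff_of_sum_ite_sub_ite_eq_zero {R G ι : Type*} [Ring R] [Nontrivial R] [Monoid G]
    [Fintype ι] {S : ι → G} (hS : Function.Injective S) (σ : Equiv.Perm ι)
    {P Q : ι → Prop} [DecidablePred P] [DecidablePred Q]
    (h : ∑ i, ((if P i then of R G (S (σ i)) else 0) - (if Q i then of R G (S i) else 0)) = 0)
    (i : ι) : P i ↔ Q (σ i) := by
  set c : ι → R := fun i => (if P (σ.symm i) then 1 else 0) - if Q i then 1 else 0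
  have hshift : ∑ i, (if P i then of R G (S (σ i)) else 0) =
      ∑ i, if P (σ.symm i) then of R G (S i) else 0 := by
    rw [← Equiv.sum_comp σ (fun i => if P (σ.symm i) then of R G (S i) else 0)]
    simp only [Equiv.symm_apply_apply]
  have hsum : ∑ i, c i • basis G R (S i) = 0 := by
    rw [← h, Finset.sum_sub_distrib, hshift, ← Finset.sum_sub_distrib]
    refine Finset.sum_congr rfl fun i _ => ?_
    simp only [c, sub_smul, ite_smul, one_smul, zero_smul, basis_apply, of_apply]
  have hc := Fintype.linearIndependent_iff.1 ((basis G R).linearIndependent.comp S hS) c hsum (σ i)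
  simp only [c, Equiv.symm_apply_apply, sub_eq_zero] at hc
  split_ifs at hc <;> simp_all

end MonoidAlgebra

namespace FreeGroup

variable {α : Type*}

theorem mk_singleton_false (a : α) : mk [(a, false)] = (of a)⁻¹ := by
  simp [of, inv_mk, invRev]

theorem mk_mem_closure_image_of {s : Set α} {L : List (α × Bool)} (hL : ∀ a ∈ L, a.1 ∈ s) :
    mk L ∈ Subgroup.closure (of '' s) := by
  induction L with
  | nil => exact Subgroup.one_mem _
  | cons a L ih =>
    have hof : of a.1 ∈ Subgroup.closure (of '' s) :=
      Subgroup.subset_closure ⟨a.1, hL a List.mem_cons_self, rfl⟩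
    have ha : mk [a] ∈ Subgroup.closure (of '' s) := by
      rcases a with ⟨j, _ | _⟩
      · exact mk_singleton_false j ▸ Subgroup.inv_mem _ hof
      · exact hof
    exact Subgroup.mul_mem _ ha (ih fun b hb => hL b (List.mem_cons_of_mem _ hb))

theorem IsCyclicallyReduced.snd_eq_of_fst_eq {L : List (α × Bool)} (h : IsCyclicallyReduced L)
    (j : Fin L.length) (hj : L[j].1 = L[finRotate _ j].1) : L[j].2 = L[finRotate _ j].2 := by
  have hrot := val_finRotate j
  split_ifs at hrot with hlast
  · simp only [Fin.getElem_fin, hrot] at hj ⊢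
    refine h.2 _ ?_ _ ?_ hj
    · simp [List.getLast?_eq_getElem?, ← hlast]
    · simp [List.head?_eq_getElem?]
  · simp only [Fin.getElem_fin, hrot] at hj ⊢
    exact h.1.getElem j (by omega) hj

variable [DecidableEq α] {N : Subgroup (FreeGroup α)}

theorem exists_ne_one_norm_minimal {r : FreeGroup α} (hr : r ∈ N) (hr1 : r ≠ 1) :
    ∃ w ∈ N, w ≠ 1 ∧ ∀ z ∈ N, z.norm < w.norm → z = 1 := by
  set s := {z | z ∈ N ∧ z ≠ 1}
  obtain ⟨hw, hw1⟩ := Function.argminOn_mem norm s ⟨r, hr, hr1⟩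
  refine ⟨_, hw, hw1, fun z hz hlt => by_contra fun h => ?_⟩
  exact Function.not_lt_argminOn norm s (a := z) ⟨hz, h⟩ hlt

variable [N.Normal] {w : FreeGroup α}

theorem isCyclicallyReduced_toWord_of_norm_minimal (hw : w ∈ N)
    (hmin : ∀ z ∈ N, z.norm < w.norm → z = 1) : IsCyclicallyReduced w.toWord := by
  have hnorm : w.norm = w.toWord.length := rfl
  have hmk : mk w.toWord = w := mk_toWord
  refine ⟨isReduced_toWord, ?_⟩
  generalize w.toWord = L at hnorm hmk ⊢
  induction L using List.bidirectionalRec with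
  | nil => simp
  | singleton => simp
  | cons_append b M a =>
    rw [← List.cons_append, List.getLast?_concat, List.head?_append_of_ne_nil _ (by simp)]
    simp only [List.head?_cons, Option.mem_some_iff, forall_eq']
    intro hab
    by_contra hne
    have hba : mk [b] = (mk [a])⁻¹ := by
      rcases a with ⟨i, _ | _⟩ <;> rcases b with ⟨j, _ | _⟩ <;> simp_all [invRev]
    have hM : mk M = mk [a] * w * (mk [a])⁻¹ := by
      rw [← hmk, show b :: (M ++ [a]) = [b] ++ M ++ [a] from rfl, ← mul_mk, ← mul_mk, hba]
      group
    have hM1 := hmin _ (hM ▸ Subgroup.Normal.conj_mem ‹_› w hw _)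
      (lt_of_le_of_lt norm_mk_le (by simp [hnorm]))
    rw [hM, mul_inv_eq_one, mul_eq_left] at hM1
    simp [hM1] at hnorm

theorem mk_drop_ne_of_norm_minimal (hmin : ∀ z ∈ N, z.norm < w.norm → z = 1) {a b : ℕ}
    (hab : a < b) (hb : b < w.toWord.length) :
    (mk (w.toWord.drop a) : FreeGroup α ⧸ N) ≠ mk (w.toWord.drop b) := by
  set L := w.toWord
  set seg := (L.drop a).take (b - a)
  have hsplit : seg ++ L.drop b = L.drop a := by
    rw [← List.take_append_drop (b - a) (L.drop a), List.drop_drop, Nat.add_sub_cancel' hab.le]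
  have hseg : seg <:+: L :=
    ⟨L.take a, L.drop b, by rw [List.append_assoc, hsplit, List.take_append_drop]⟩
  have hnorm : (mk seg).norm = b - a := by
    rw [norm, toWord_mk, (isReduced_toWord.infix hseg).reduce_eq]
    simp only [seg, List.length_take, List.length_drop]
    omega
  intro h
  rw [← hsplit, ← mul_mk, QuotientGroup.mk_mul, mul_eq_right, QuotientGroup.eq_one_iff] at h
  have h1 := hmin _ h (by rw [hnorm]; exact lt_of_le_of_lt (Nat.sub_le b a) hb)
  rw [h1, norm_one] at hnorm
  omega

theorem injective_mk_drop_of_norm_minimal (hmin : ∀ z ∈ N, z.norm < w.norm → z = 1) :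
    Function.Injective fun j : Fin w.toWord.length =>
      (mk (w.toWord.drop j) : FreeGroup α ⧸ N) := by
  intro a b h
  by_contra hne
  rcases Nat.lt_or_gt_of_ne (Fin.val_ne_iff.2 hne) with hab | hab
  · exact mk_drop_ne_of_norm_minimal hmin hab b.2 h
  · exact mk_drop_ne_of_norm_minimal hmin hab a.2 h.symm

theorem mk_drop_succ_eq_mk_drop_finRotate (hw : w ∈ N) (j : Fin w.toWord.length) :
    (mk (w.toWord.drop (j + 1)) : FreeGroup α ⧸ N) = mk (w.toWord.drop (finRotate _ j)) := by
  have hrot := val_finRotate j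
  split_ifs at hrot with hlast
  · rw [hrot, hlast, List.drop_length, List.drop_zero, mk_toWord, ← one_eq_mk,
      QuotientGroup.mk_one, eq_comm, QuotientGroup.eq_one_iff]
    exact hw
  · rw [hrot]

end FreeGroup

open MonoidAlgebra (of mapDomainRingHom)

theorem mapDomainRingHom_eq_zero_of_mem_NIdeal {J : Type} (N : Subgroup (FreeGroup J)) [N.Normal]
    {x : MonoidAlgebra ℤ (FreeGroup J)} (hx : x ∈ NIdeal N) :
    mapDomainRingHom ℤ (QuotientGroup.mk' N) x = 0 := by
  induction hx using Submodule.span_induction with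
  | mem _ h =>
    obtain ⟨u, n, hn, rfl⟩ := h
    rw [map_mul, map_sub, map_one, MonoidAlgebra.mapDomainRingHom_of, QuotientGroup.mk'_apply,
      (QuotientGroup.eq_one_iff n).2 hn, (of ℤ _).map_one, sub_self, mul_zero]
  | zero => exact map_zero _
  | add _ _ _ _ hx hy => rw [map_add, hx, hy, add_zero]
  | smul a _ _ hx => rw [map_zsmul, hx, smul_zero]

namespace IsFoxDerivative

variable {J : Type} {k : J}
  {D : MonoidAlgebra ℤ (FreeGroup J) →ₗ[ℤ] MonoidAlgebra ℤ (FreeGroup J)}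

theorem map_one (hD : IsFoxDerivative k D) : D 1 = 0 := by
  simpa using hD.1 1 1

theorem map_of_mul (hD : IsFoxDerivative k D) (u v : FreeGroup J) :
    D (of ℤ _ (u * v)) = D (of ℤ _ u) * of ℤ _ v + D (of ℤ _ v) := by
  rw [map_mul, hD.1, aug, MonoidAlgebra.lift_of, MonoidHom.one_apply, one_smul]

theorem map_of_inv (hD : IsFoxDerivative k D) (u : FreeGroup J) :
    D (of ℤ _ u⁻¹) = -(D (of ℤ _ u) * of ℤ _ u⁻¹) := by
  have h := hD.map_of_mul u u⁻¹
  rw [mul_inv_cancel, (of ℤ _).map_one, hD.map_one] at h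
  exact eq_neg_of_add_eq_zero_right h.symm

theorem map_of_mk [DecidableEq J] (hD : IsFoxDerivative k D) (L : List (J × Bool)) :
    D (of ℤ _ (FreeGroup.mk L)) = ∑ j : Fin L.length,
      ((if L[j] = (k, true) then of ℤ _ (FreeGroup.mk (L.drop (j + 1))) else 0) -
        (if L[j] = (k, false) then of ℤ _ (FreeGroup.mk (L.drop j)) else 0)) := by
  induction L with
  | nil => rw [← FreeGroup.one_eq_mk, (of ℤ _).map_one, hD.map_one]; rfl
  | cons a L ih =>
    rw [show FreeGroup.mk (a :: L) = FreeGroup.mk [a] * FreeGroup.mk L from rfl, hD.map_of_mul,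
      ih]
    simp only [List.length_cons, Fin.sum_univ_succ, Fin.getElem_fin, Fin.val_succ, Fin.val_zero,
      List.getElem_cons_succ, List.getElem_cons_zero, List.drop_succ_cons, List.drop_zero]
    congr 1
    rcases a with ⟨j, _ | _⟩
    · rw [FreeGroup.mk_singleton_false, hD.map_of_inv, hD.2, neg_mul, mul_assoc, ← map_mul,
        ← FreeGroup.mk_singleton_false]
      by_cases hj : k = j <;> simp [hj, eq_comm]
    · rw [show FreeGroup.mk [(j, true)] = FreeGroup.of j from rfl, hD.2]
      by_cases hj : k = j <;> simp [hj, eq_comm]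

variable {N : Subgroup (FreeGroup J)} [N.Normal]

theorem mapDomainRingHom_eq_zero_of_mem_normalClosure (hD : IsFoxDerivative k D)
    {r : FreeGroup J} (hrN : r ∈ N)
    (hr : mapDomainRingHom ℤ (QuotientGroup.mk' N) (D (of ℤ _ r)) = 0)
    {w : FreeGroup J} (hw : w ∈ Subgroup.normalClosure {r}) :
    mapDomainRingHom ℤ (QuotientGroup.mk' N) (D (of ℤ _ w)) = 0 := by
  set π := mapDomainRingHom ℤ (QuotientGroup.mk' N)
  have hmul (u v : FreeGroup J) :
      π (D (of ℤ _ (u * v))) = π (D (of ℤ _ u)) * π (of ℤ _ v) + π (D (of ℤ _ v)) := by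
    rw [hD.map_of_mul, map_add, map_mul]
  induction hw using Subgroup.closure_induction with
  | mem x hx =>
    obtain ⟨_, hr', hconj⟩ := Group.mem_conjugatesOfSet_iff.1 hx
    obtain ⟨c, rfl⟩ := isConj_iff.1 (Set.mem_singleton_iff.1 hr' ▸ hconj)
    have hr1 : π (of ℤ _ r) = 1 := by
      rw [MonoidAlgebra.mapDomainRingHom_of, QuotientGroup.mk'_apply,
        (QuotientGroup.eq_one_iff r).2 hrN, (of ℤ _).map_one]
    rw [hmul, hmul, hr, hr1, mul_one, add_zero, ← hmul, mul_inv_cancel, (of ℤ _).map_one,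
      hD.map_one, map_zero]
  | one => rw [(of ℤ _).map_one, hD.map_one, map_zero]
  | mul x y _ _ hx hy => rw [hmul, hx, hy, zero_mul, add_zero]
  | inv x _ hx => rw [hD.map_of_inv, map_neg, map_mul, hx, zero_mul, neg_zero]

open FreeGroup in
theorem fst_ne_of_norm_minimal [DecidableEq J] (hD : IsFoxDerivative k D) {w : FreeGroup J}
    (hw : w ∈ N) (hmin : ∀ z ∈ N, z.norm < w.norm → z = 1)
    (hδ : mapDomainRingHom ℤ (QuotientGroup.mk' N) (D (of ℤ _ w)) = 0) :
    ∀ a ∈ w.toWord, a.1 ≠ k := by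
  have hformula := congrArg (mapDomainRingHom ℤ (QuotientGroup.mk' N)) (hD.map_of_mk w.toWord)
  rw [mk_toWord, hδ, map_sum, eq_comm] at hformula
  simp only [map_sub, apply_ite (mapDomainRingHom ℤ (QuotientGroup.mk' N)), map_zero,
    MonoidAlgebra.mapDomainRingHom_of, QuotientGroup.mk'_apply,
    mk_drop_succ_eq_mk_drop_finRotate hw] at hformula
  set L := w.toWord
  have hiff := MonoidAlgebra.iff_of_sum_ite_sub_ite_eq_zero
    (injective_mk_drop_of_norm_minimal hmin) (finRotate _) hformula
  have hcyc := (isCyclicallyReduced_toWord_of_norm_minimal hw hmin).snd_eq_of_fst_eq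
  have hpos (j : Fin L.length) : L[j] ≠ (k, true) := fun hj => by
    have h := hcyc j
    rw [hj, (hiff j).1 hj] at h
    exact Bool.true_eq_false_eq_False (h rfl)
  have hneg (j : Fin L.length) : L[j] ≠ (k, false) := fun hj =>
    hpos _ ((hiff _).2 (by rwa [Equiv.apply_symm_apply]))
  intro a ha hak
  obtain ⟨j, rfl⟩ := List.get_of_mem ha
  cases hb : (L.get j).2
  · exact hneg j (Prod.ext hak hb)
  · exact hpos j (Prod.ext hak hb)

end IsFoxDerivative

/-- Magnus-type necessary condition: if `H ∩ R = 1` where `R` is the normal closure of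
`r ≠ 1` and `H = ⟨x_1,…,x_n⟩` (all generators but the last), then
`D_{n+1}(r) ≢ 0 mod ℤ[F]·(R−1)`. -/
theorem fox_derivative_ne_zero_of_inter_trivial (n : ℕ)
    (D : MonoidAlgebra ℤ (FreeGroup (Fin (n + 1))) →ₗ[ℤ] MonoidAlgebra ℤ (FreeGroup (Fin (n + 1))))
    (hD : IsFoxDerivative (Fin.last n) D)
    (r : FreeGroup (Fin (n + 1))) (hr : r ≠ 1)
    (R : Subgroup (FreeGroup (Fin (n + 1)))) (hR : R = Subgroup.normalClosure {r})
    (H : Subgroup (FreeGroup (Fin (n + 1))))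
    (hH : H = Subgroup.closure (FreeGroup.of '' {i : Fin (n + 1) | i ≠ Fin.last n}))
    (hHR : H ⊓ R = ⊥) :
    D (MonoidAlgebra.of ℤ (FreeGroup (Fin (n + 1))) r) ∉ NIdeal R := by
  intro hmem
  subst hR hH
  have hrR : r ∈ Subgroup.normalClosure {r} := Subgroup.subset_normalClosure rfl
  obtain ⟨w, hwR, hw1, hmin⟩ := FreeGroup.exists_ne_one_norm_minimal hrR hr
  have hδ := hD.mapDomainRingHom_eq_zero_of_mem_normalClosure hrR
    (mapDomainRingHom_eq_zero_of_mem_NIdeal _ hmem) hwR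
  have hwH : w ∈ Subgroup.closure (FreeGroup.of '' {i : Fin (n + 1) | i ≠ Fin.last n}) := by
    rw [← FreeGroup.mk_toWord (x := w)]
    exact FreeGroup.mk_mem_closure_image_of (hD.fst_ne_of_norm_minimal hwR hmin hδ)
  exact hw1 (Subgroup.mem_bot.1 (hHR ▸ ⟨hwH, hwR⟩))
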